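/- arXiv:2301.04247 — 2 statements merged into one kernel-verified Lean document; each statement's English description precedes it below -/
import Mathlib

section
/- Let A be a C*-algebra and H an algebraically finitely generated Hilbert A-module, meaning H = ξ₁·Ã + ⋯ + ξₙ·Ã for some ξᵢ ∈ H (Ã the minimal unitization). Then there exist y₁, …, yₙ ∈ H with H = {∑ᵢ yᵢ·aᵢ : aᵢ ∈ A}, i.e., H is algebraically generated using only elements of A. -/
open scoped RightActions

/-- The Hilbert C⋆-module class as it stood in Mathlib (December 2024): a right `A`-module
(action of `Aᵐᵒᵖ`) with an `A`-valued inner product, `A`-linear on the right. -/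
class RightCStarModule (A E : Type*) [NonUnitalSemiring A] [StarRing A]
    [Module ℂ A] [AddCommGroup E] [Module ℂ E] [PartialOrder A] [SMul Aᵐᵒᵖ E] [Norm A] [Norm E]
    extends Inner A E where
  inner_add_right {x} {y} {z} : inner x (y + z) = inner x y + inner x z
  inner_self_nonneg {x} : 0 ≤ inner x x
  inner_self {x} : inner x x = 0 ↔ x = 0
  inner_op_smul_right {a : A} {x y : E} : inner x (y <• a) = inner x y * a
  inner_smul_right_complex {z : ℂ} {x} {y} : inner x (z • y) = z • inner x y
  star_inner x y : star (inner x y) = inner y x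
  norm_eq_sqrt_norm_inner_self x : ‖x‖ = √‖inner x x‖

/-!
Every vector of a Hilbert C⋆-module factors through the algebra: with `t = ⟪x, x⟫` and
`f_ε(s) = s ^ (3/4) / (s + ε)`, the identity `⟪x·g(t), x·g(t)⟫ = (s ↦ s g(s)²)(t)` bounds
`‖x·f_ε(t) - x·f_δ(t)‖` by `ε ^ (1/4)` for `δ ≤ ε`, so `x·f_ε(t)` converges to some `y` as `ε → 0`,
while `x·f_ε(t)·t ^ (1/4) = x·t(t + ε)⁻¹` tends to `x`; hence `x = y·t ^ (1/4)`.
Factoring each generator as `ξᵢ = yᵢ·bᵢ`, an `Ã`-combination `∑ (λᵢ ξᵢ + ξᵢ aᵢ)` becomes the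
`A`-combination `∑ yᵢ·(λᵢ bᵢ + bᵢ aᵢ)`.
-/

namespace RightCStarModule

section Algebra

variable {A E : Type*} [NonUnitalRing A] [StarRing A] [Module ℂ A] [PartialOrder A] [Norm A]
    [AddCommGroup E] [Module ℂ E] [SMul Aᵐᵒᵖ E] [Norm E] [RightCStarModule A E]

local notation "⟪" x ", " y "⟫" => inner A x y

lemma inner_sub_right (x y z : E) : ⟪x, y - z⟫ = ⟪x, y⟫ - ⟪x, z⟫ :=
  map_sub (AddMonoidHom.mk' (inner A x) fun _ _ ↦ inner_add_right (A := A)) y z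

variable (A) in
lemma ext_inner_right {y z : E} (h : ∀ v : E, ⟪v, y⟫ = ⟪v, z⟫) : y = z :=
  sub_eq_zero.mp <| (inner_self (A := A)).mp <| by rw [inner_sub_right, h, sub_self]

lemma op_smul_add (x : E) (a b : A) : x <• (a + b) = x <• a + x <• b :=
  ext_inner_right A fun v ↦ by simp only [inner_add_right, inner_op_smul_right, mul_add]

lemma op_smul_sub (x : E) (a b : A) : x <• (a - b) = x <• a - x <• b :=
  ext_inner_right A fun v ↦ by simp only [inner_sub_right, inner_op_smul_right, mul_sub]

lemma add_op_smul (x y : E) (a : A) : (x + y) <• a = x <• a + y <• a :=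
  ext_inner_right A fun v ↦ by simp only [inner_add_right, inner_op_smul_right, add_mul]

lemma op_smul_op_smul (x : E) (a b : A) : x <• a <• b = x <• (a * b) :=
  ext_inner_right A fun v ↦ by simp only [inner_op_smul_right, mul_assoc]

lemma smul_op_smul [SMulCommClass ℂ A A] (c : ℂ) (x : E) (a : A) : c • (x <• a) = x <• (c • a) :=
  ext_inner_right A fun v ↦ by
    simp only [inner_smul_right_complex, inner_op_smul_right, mul_smul_comm]

lemma inner_sub_left (x y z : E) : ⟪x - y, z⟫ = ⟪x, z⟫ - ⟪y, z⟫ := by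
  rw [← star_inner z, inner_sub_right, star_sub, star_inner, star_inner]

lemma inner_op_smul_left (a : A) (x y : E) : ⟪x <• a, y⟫ = star a * ⟪x, y⟫ := by
  rw [← star_inner y, inner_op_smul_right, star_mul, star_inner]

lemma isSelfAdjoint_inner_self (x : E) : IsSelfAdjoint ⟪x, x⟫ := star_inner x x

end Algebra

section Analysis

variable {A E : Type*} [NonUnitalCStarAlgebra A] [PartialOrder A]
    [NormedAddCommGroup E] [NormedSpace ℂ E] [SMul Aᵐᵒᵖ E] [RightCStarModule A E]

local notation "⟪" x ", " y "⟫" => inner A x y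

variable (A) in
lemma norm_sq_eq_norm_inner_self (x : E) : ‖x‖ ^ 2 = ‖⟪x, x⟫‖ := by
  rw [norm_eq_sqrt_norm_inner_self (A := A) x, Real.sq_sqrt (norm_nonneg _)]

lemma norm_op_smul_le (x : E) (a : A) : ‖x <• a‖ ≤ ‖a‖ * ‖x‖ := by
  refine (pow_le_pow_iff_left₀ (norm_nonneg _) (by positivity) two_ne_zero).mp ?_
  calc ‖x <• a‖ ^ 2 = ‖star a * (⟪x, x⟫ * a)‖ := by
        rw [norm_sq_eq_norm_inner_self A, inner_op_smul_left, inner_op_smul_right]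
    _ ≤ ‖a‖ * (‖⟪x, x⟫‖ * ‖a‖) := by
        grw [norm_mul_le, norm_mul_le, norm_star]
    _ = (‖a‖ * ‖x‖) ^ 2 := by rw [← norm_sq_eq_norm_inner_self A]; ring

lemma continuous_op_smul (a : A) : Continuous fun x : E ↦ x <• a :=
  AddMonoidHomClass.continuous_of_bound (AddMonoidHom.mk' (· <• a) fun x y ↦ add_op_smul x y a)
    ‖a‖ (norm_op_smul_le · a)

lemma inner_op_smul_cfcₙ_self (x : E) {f : ℝ → ℝ}
    (hf : ContinuousOn f (quasispectrum ℝ ⟪x, x⟫)) (hf0 : f 0 = 0) :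
    ⟪x <• cfcₙ f ⟪x, x⟫, x <• cfcₙ f ⟪x, x⟫⟫ = cfcₙ (fun s ↦ s * f s ^ 2) ⟪x, x⟫ := by
  have hx := isSelfAdjoint_inner_self (A := A) x
  rw [inner_op_smul_left, inner_op_smul_right, (cfcₙ_predicate f ⟪x, x⟫).star_eq]
  conv_rhs => rw [show (fun s ↦ s * f s ^ 2) = fun s ↦ f s * (s * f s) by ext; ring]
  rw [cfcₙ_mul .., cfcₙ_mul .., cfcₙ_id' ℝ ⟪x, x⟫]

lemma inner_sub_op_smul_cfcₙ_self (x : E) {f : ℝ → ℝ}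
    (hf : ContinuousOn f (quasispectrum ℝ ⟪x, x⟫)) (hf0 : f 0 = 0) :
    ⟪x - x <• cfcₙ f ⟪x, x⟫, x - x <• cfcₙ f ⟪x, x⟫⟫ =
      cfcₙ (fun s ↦ s * (1 - f s) ^ 2) ⟪x, x⟫ := by
  have hx := isSelfAdjoint_inner_self (A := A) x
  have hfx := (cfcₙ_predicate f ⟪x, x⟫).star_eq
  conv_rhs => rw [show (fun s ↦ s * (1 - f s) ^ 2) =
    fun s ↦ s - s * f s - f s * s + f s * (s * f s) by ext; ring]
  rw [cfcₙ_add .., cfcₙ_sub .., cfcₙ_sub .., cfcₙ_mul .., cfcₙ_mul .., cfcₙ_mul .., cfcₙ_mul ..,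
    cfcₙ_id' ℝ ⟪x, x⟫]
  simp only [inner_sub_left, inner_sub_right, inner_op_smul_left, inner_op_smul_right, hfx]
  noncomm_ring

lemma norm_le_sqrt_of_inner_self_eq_cfcₙ {v : E} {a : A} {g : ℝ → ℝ} (hv : ⟪v, v⟫ = cfcₙ g a)
    {C : ℝ} (hC : ∀ s ∈ quasispectrum ℝ a, |g s| ≤ C) : ‖v‖ ≤ √C :=
  Real.le_sqrt_of_sq_le <| norm_sq_eq_norm_inner_self A v ▸ hv ▸ norm_cfcₙ_le hC

variable [StarOrderedRing A]

lemma quasispectrum_inner_self_subset_Ici (x : E) : quasispectrum ℝ ⟪x, x⟫ ⊆ Set.Ici 0 :=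
  fun s hs ↦ quasispectrum_nonneg_of_nonneg _ inner_self_nonneg s hs

lemma norm_op_smul_cfcₙ_le (x : E) {f : ℝ → ℝ}
    (hf : ContinuousOn f (quasispectrum ℝ ⟪x, x⟫)) (hf0 : f 0 = 0)
    {C : ℝ} (hC : ∀ s ∈ quasispectrum ℝ ⟪x, x⟫, s * f s ^ 2 ≤ C) :
    ‖x <• cfcₙ f ⟪x, x⟫‖ ≤ √C := by
  refine norm_le_sqrt_of_inner_self_eq_cfcₙ (inner_op_smul_cfcₙ_self x hf hf0) fun s hs ↦ ?_
  rw [abs_of_nonneg (mul_nonneg (quasispectrum_inner_self_subset_Ici x hs) (sq_nonneg _))]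
  exact hC s hs

lemma norm_sub_op_smul_cfcₙ_le (x : E) {f : ℝ → ℝ}
    (hf : ContinuousOn f (quasispectrum ℝ ⟪x, x⟫)) (hf0 : f 0 = 0)
    {C : ℝ} (hC : ∀ s ∈ quasispectrum ℝ ⟪x, x⟫, s * (1 - f s) ^ 2 ≤ C) :
    ‖x - x <• cfcₙ f ⟪x, x⟫‖ ≤ √C := by
  refine norm_le_sqrt_of_inner_self_eq_cfcₙ (inner_sub_op_smul_cfcₙ_self x hf hf0) fun s hs ↦ ?_
  rw [abs_of_nonneg (mul_nonneg (quasispectrum_inner_self_subset_Ici x hs) (sq_nonneg _))]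
  exact hC s hs

end Analysis

end RightCStarModule

noncomputable def fourthRoot (s : ℝ) : ℝ := √√s

noncomputable def approxInvFourthRoot (ε s : ℝ) : ℝ := fourthRoot s ^ 3 / (s + ε)

lemma continuous_fourthRoot : Continuous fourthRoot :=
  Real.continuous_sqrt.comp Real.continuous_sqrt

@[simp] lemma fourthRoot_zero : fourthRoot 0 = 0 := by simp [fourthRoot]

lemma fourthRoot_nonneg (s : ℝ) : 0 ≤ fourthRoot s := Real.sqrt_nonneg _

lemma fourthRoot_pow_four {s : ℝ} (hs : 0 ≤ s) : fourthRoot s ^ 4 = s := by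
  rw [fourthRoot, show 4 = 2 * 2 by rfl, pow_mul, Real.sq_sqrt (Real.sqrt_nonneg s),
    Real.sq_sqrt hs]

@[simp] lemma approxInvFourthRoot_zero (ε : ℝ) : approxInvFourthRoot ε 0 = 0 := by
  simp [approxInvFourthRoot]

lemma continuousOn_approxInvFourthRoot {ε : ℝ} (hε : 0 < ε) :
    ContinuousOn (approxInvFourthRoot ε) (Set.Ici 0) :=
  (continuous_fourthRoot.pow 3).continuousOn.div (by fun_prop) fun s hs ↦
    (add_pos_of_nonneg_of_pos hs hε).ne'

lemma approxInvFourthRoot_mul_fourthRoot {ε s : ℝ} (hs : 0 ≤ s) :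
    approxInvFourthRoot ε s * fourthRoot s = s / (s + ε) := by
  rw [approxInvFourthRoot, div_mul_eq_mul_div, ← pow_succ, fourthRoot_pow_four hs]

lemma mul_one_sub_div_add_sq_le {ε s : ℝ} (hs : 0 ≤ s) (hε : 0 < ε) :
    s * (1 - s / (s + ε)) ^ 2 ≤ ε := by
  have hsε : 0 < s + ε := by positivity
  rw [one_sub_div hsε.ne', add_sub_cancel_left, div_pow, mul_div_assoc',
    div_le_iff₀ (by positivity)]
  nlinarith [mul_nonneg (mul_nonneg hs hε.le) hε.le, mul_nonneg hs hs]

lemma mul_sub_approxInvFourthRoot_sq_le {ε δ s : ℝ} (hs : 0 ≤ s) (hδ : 0 < δ) (hδε : δ ≤ ε) :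
    s * (approxInvFourthRoot ε s - approxInvFourthRoot δ s) ^ 2 ≤ √ε := by
  obtain ⟨r, hr, rfl⟩ : ∃ r, 0 ≤ r ∧ r ^ 4 = s := ⟨_, fourthRoot_nonneg s, fourthRoot_pow_four hs⟩
  obtain ⟨e, he, rfl⟩ : ∃ e, 0 < e ∧ e ^ 2 = ε :=
    ⟨√ε, Real.sqrt_pos.mpr (hδ.trans_le hδε), Real.sq_sqrt (by linarith)⟩
  have hrr : fourthRoot (r ^ 4) = r := by
    rw [← pow_left_inj₀ (fourthRoot_nonneg _) hr four_ne_zero, fourthRoot_pow_four (by positivity)]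
  rw [Real.sqrt_sq he.le, approxInvFourthRoot, approxInvFourthRoot, hrr,
    div_sub_div _ _ (by positivity) (by positivity), div_pow, mul_div_assoc',
    div_le_iff₀ (by positivity)]
  have key : r ^ 2 * e ^ 3 ≤ (r ^ 4 + e ^ 2) ^ 2 := by
    nlinarith [sq_nonneg (r ^ 2 - e), mul_nonneg (sq_nonneg r) (pow_pos he 3).le, sq_nonneg r,
      pow_pos he 4]
  have h1 : (r ^ 4) ^ 2 ≤ (r ^ 4 + δ) ^ 2 := by gcongr; linarith
  have h2 : (e ^ 2 - δ) ^ 2 ≤ (e ^ 2) ^ 2 := by nlinarith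
  calc r ^ 4 * (r ^ 3 * (r ^ 4 + δ) - (r ^ 4 + e ^ 2) * r ^ 3) ^ 2
      = r ^ 2 * (e ^ 2 - δ) ^ 2 * (r ^ 4) ^ 2 := by ring
    _ ≤ r ^ 2 * (e ^ 2) ^ 2 * (r ^ 4 + δ) ^ 2 := by gcongr
    _ = r ^ 2 * e ^ 3 * e * (r ^ 4 + δ) ^ 2 := by ring
    _ ≤ (r ^ 4 + e ^ 2) ^ 2 * e * (r ^ 4 + δ) ^ 2 := by gcongr
    _ = e * ((r ^ 4 + e ^ 2) * (r ^ 4 + δ)) ^ 2 := by ring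

namespace RightCStarModule

variable {A E : Type*} [NonUnitalCStarAlgebra A] [PartialOrder A] [StarOrderedRing A]
    [NormedAddCommGroup E] [NormedSpace ℂ E] [SMul Aᵐᵒᵖ E] [RightCStarModule A E]

local notation "⟪" x ", " y "⟫" => inner A x y

open Filter Topology

lemma norm_op_smul_cfcₙ_approxInvFourthRoot_sub_le (x : E) {ε δ : ℝ} (hδ : 0 < δ) (hδε : δ ≤ ε) :
    ‖x <• cfcₙ (approxInvFourthRoot ε) ⟪x, x⟫ - x <• cfcₙ (approxInvFourthRoot δ) ⟪x, x⟫‖ ≤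
      fourthRoot ε := by
  have hfε := (continuousOn_approxInvFourthRoot (hδ.trans_le hδε)).mono
    (quasispectrum_inner_self_subset_Ici (A := A) x)
  have hfδ := (continuousOn_approxInvFourthRoot hδ).mono
    (quasispectrum_inner_self_subset_Ici (A := A) x)
  rw [← op_smul_sub, ← cfcₙ_sub ..]
  exact norm_op_smul_cfcₙ_le x (hfε.sub hfδ) (by simp) fun s hs ↦
    mul_sub_approxInvFourthRoot_sq_le (quasispectrum_inner_self_subset_Ici x hs) hδ hδε

lemma cauchySeq_op_smul_cfcₙ_approxInvFourthRoot (x : E) :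
    CauchySeq fun k : ℕ ↦ x <• cfcₙ (approxInvFourthRoot (1 / (k + 1))) ⟪x, x⟫ := by
  refine cauchySeq_of_le_tendsto_0 (fun N : ℕ ↦ fourthRoot (1 / (N + 1))) (fun n m N hn hm ↦ ?_)
    ((continuous_fourthRoot.tendsto' 0 0 fourthRoot_zero).comp
      tendsto_one_div_add_atTop_nhds_zero_nat)
  have fourthRoot_mono {k : ℕ} (hk : N ≤ k) :
      fourthRoot (1 / (k + 1)) ≤ fourthRoot (1 / (N + 1)) :=
    Real.sqrt_le_sqrt (Real.sqrt_le_sqrt (Nat.one_div_le_one_div hk))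
  rw [dist_eq_norm]
  rcases le_total n m with hnm | hmn
  · exact (norm_op_smul_cfcₙ_approxInvFourthRoot_sub_le x Nat.one_div_pos_of_nat
      (Nat.one_div_le_one_div hnm)).trans (fourthRoot_mono hn)
  · rw [norm_sub_rev]
    exact (norm_op_smul_cfcₙ_approxInvFourthRoot_sub_le x Nat.one_div_pos_of_nat
      (Nat.one_div_le_one_div hmn)).trans (fourthRoot_mono hm)

lemma tendsto_op_smul_cfcₙ_approxInvFourthRoot_op_smul_cfcₙ_fourthRoot (x : E) :
    Tendsto (fun k : ℕ ↦ x <• cfcₙ (approxInvFourthRoot (1 / (k + 1))) ⟪x, x⟫ <•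
      cfcₙ fourthRoot ⟪x, x⟫) atTop (𝓝 x) := by
  rw [tendsto_iff_norm_sub_tendsto_zero]
  refine squeeze_zero (fun _ ↦ norm_nonneg _) (fun k ↦ ?_)
    ((Real.continuous_sqrt.tendsto' 0 0 Real.sqrt_zero).comp
      tendsto_one_div_add_atTop_nhds_zero_nat)
  have hf := (continuousOn_approxInvFourthRoot (Nat.one_div_pos_of_nat (n := k))).mono
    (quasispectrum_inner_self_subset_Ici (A := A) x)
  have hq := continuous_fourthRoot.continuousOn (s := quasispectrum ℝ ⟪x, x⟫)
  rw [op_smul_op_smul, ← cfcₙ_mul .., norm_sub_rev]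
  refine norm_sub_op_smul_cfcₙ_le x (hf.mul hq) (by simp) (C := 1 / (k + 1)) fun s hs ↦ ?_
  have hs := quasispectrum_inner_self_subset_Ici x hs
  rw [Pi.mul_apply, approxInvFourthRoot_mul_fourthRoot hs]
  exact mul_one_sub_div_add_sq_le hs Nat.one_div_pos_of_nat

lemma exists_eq_op_smul [CompleteSpace E] (x : E) : ∃ (y : E) (a : A), x = y <• a := by
  obtain ⟨y, hy⟩ :=
    cauchySeq_tendsto_of_complete (cauchySeq_op_smul_cfcₙ_approxInvFourthRoot (A := A) x)
  exact ⟨y, cfcₙ fourthRoot ⟪x, x⟫, tendsto_nhds_unique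
    (tendsto_op_smul_cfcₙ_approxInvFourthRoot_op_smul_cfcₙ_fourthRoot x)
    (((continuous_op_smul (cfcₙ fourthRoot ⟪x, x⟫)).tendsto y).comp hy)⟩

end RightCStarModule

/-- If a Hilbert `A`-module `H` is algebraically finitely generated over the minimal
unitization `Ã`, i.e. `H = ξ₁·Ã + ⋯ + ξₙ·Ã` (every element is a sum of scalar multiples
`λᵢ • ξᵢ` and module multiples `ξᵢ · aᵢ` with `aᵢ ∈ A`), then there exist `y₁, …, yₙ ∈ H`
with `H = {∑ᵢ yᵢ·aᵢ : aᵢ ∈ A}`, i.e. `H` is algebraically generated using only elements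
of `A`. -/
theorem stmt5 {A E : Type*} [NonUnitalCStarAlgebra A] [PartialOrder A] [StarOrderedRing A]
    [NormedAddCommGroup E] [NormedSpace ℂ E] [SMul Aᵐᵒᵖ E] [RightCStarModule A E] [CompleteSpace E]
    {n : ℕ} (ξ : Fin n → E)
    (hgen : ∀ h : E, ∃ (c : Fin n → ℂ) (a : Fin n → A),
      h = ∑ i, (c i • ξ i + ξ i <• a i)) :
    ∃ y : Fin n → E, ∀ h : E, ∃ a : Fin n → A, h = ∑ i, y i <• a i := by
  choose y b hξ using fun i ↦ RightCStarModule.exists_eq_op_smul (A := A) (ξ i)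
  refine ⟨y, fun h ↦ ?_⟩
  obtain ⟨c, a, rfl⟩ := hgen h
  refine ⟨fun i ↦ c i • b i + b i * a i, Finset.sum_congr rfl fun i _ ↦ ?_⟩
  rw [hξ i, RightCStarModule.smul_op_smul, RightCStarModule.op_smul_op_smul,
    ← RightCStarModule.op_smul_add]
end

section
/- Let A be a C*-algebra and H an algebraically finitely generated Hilbert A-module. Then K(H) is unital and H is self-dual, i.e., every bounded A-module map f : H → A is of the form f(x) = ⟨y, x⟩ for some y ∈ H. -/
open scoped RightActions

noncomputable section

/-- The Hilbert C⋆-module class as it stood in the older Mathlib: a right `A`-module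
(action of `Aᵐᵒᵖ`) with an `A`-valued inner product, linear in the second argument. -/
class CStarModuleRight (A E : Type*) [NonUnitalSemiring A] [StarRing A]
    [Module ℂ A] [AddCommGroup E] [Module ℂ E] [PartialOrder A] [SMul Aᵐᵒᵖ E] [Norm A] [Norm E]
    extends Inner A E where
  inner_add_right {x} {y} {z} : inner x (y + z) = inner x y + inner x z
  inner_self_nonneg {x} : 0 ≤ inner x x
  inner_self {x} : inner x x = 0 ↔ x = 0
  inner_op_smul_right {a : A} {x y : E} : inner x (y <• a) = inner x y * a
  inner_smul_right_complex {z : ℂ} {x} {y} : inner x (z • y) = z • inner x y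
  star_inner x y : star (inner x y) = inner y x
  norm_eq_sqrt_norm_inner_self x : ‖x‖ = √‖inner x x‖

/-- The C*-algebra `K(H)` of "compact" operators on a Hilbert `A`-module `H`. -/
def compactOperators (A E : Type*) [NonUnitalCStarAlgebra A] [PartialOrder A]
    [StarOrderedRing A] [NormedAddCommGroup E] [NormedSpace ℂ E] [SMul Aᵐᵒᵖ E]
    [CStarModuleRight A E] : Set (E →L[ℂ] E) :=
  closure (Submodule.span ℂ
    {T : E →L[ℂ] E | ∃ x y : E, ∀ z, T z = x <• (inner A y z : A)} : Set (E →L[ℂ] E))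

/-!
Let `F x = ∑ ξᵢ ⟪ξᵢ, x⟫` be the frame operator of the generators. The open mapping theorem,
applied to the surjection `(c, a) ↦ ∑ (cᵢ ξᵢ + ξᵢ aᵢ)`, gives `‖x‖ ≤ C ∑ ‖⟪ξᵢ, x⟫‖`; since
`‖⟪ξᵢ, x⟫‖² ≤ ‖⟪x, (F + s) x⟫‖ ≤ ‖x‖ ‖(F + s) x‖`, the operators `F + s`, `s ≥ 0`, are bounded
below uniformly in `s`. Such a bound lets invertibility pass from `s > ‖F‖` down to `s = 0` in
steps of fixed size, so `F` is invertible. With `S = F⁻¹`, symmetric like `F`, every `z` equals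
`∑ ξᵢ ⟪S ξᵢ, z⟫`: hence `1 = ∑ θ_{ξᵢ, S ξᵢ}` lies in `K(H)`, and a bounded module map `f` is
`⟪∑ (S ξᵢ) f(ξᵢ)*, ·⟫`.
-/

namespace ContinuousLinearMap

section

variable {𝕜 E : Type*} [NontriviallyNormedField 𝕜] [NormedAddCommGroup E] [NormedSpace 𝕜 E]
  [CompleteSpace E]

lemma isUnit_of_norm_sub_lt {S T : E →L[𝕜] E} (hS : IsUnit S) {c : ℝ} (hc : 0 < c)
    (hSc : ∀ x, c * ‖x‖ ≤ ‖S x‖) (hTS : ‖T - S‖ < c) : IsUnit T := by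
  nontriviality E →L[𝕜] E
  obtain ⟨u, rfl⟩ := hS
  have hinv : ‖(↑u⁻¹ : E →L[𝕜] E)‖ ≤ c⁻¹ := opNorm_le_bound _ (inv_nonneg.2 hc.le) fun y => by
    have hy : (u : E →L[𝕜] E) ((↑u⁻¹ : E →L[𝕜] E) y) = y := DFunLike.congr_fun u.mul_inv y
    have := hSc ((↑u⁻¹ : E →L[𝕜] E) y)
    rw [hy] at this
    rw [inv_mul_eq_div, le_div_iff₀ hc]
    linarith
  exact (u.ofNearby T (hTS.trans_le ((le_inv_comm₀ hc (Units.norm_pos u⁻¹)).2 hinv))).isUnit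

end

variable {𝕜 E : Type*} [RCLike 𝕜] [NormedAddCommGroup E] [NormedSpace 𝕜 E] [CompleteSpace E]

theorem isUnit_of_forall_le_norm_add_smul {T : E →L[𝕜] E} {c : ℝ} (hc : 0 < c)
    (hT : ∀ s : ℝ, 0 ≤ s → ∀ x, c * ‖x‖ ≤ ‖T x + (s : 𝕜) • x‖) : IsUnit T := by
  have key : ∀ k : ℕ, ∀ s : ℝ, 0 ≤ s → ‖T‖ < s + k * (c / 2) → IsUnit (T + (s : 𝕜) • 1) := by
    intro k
    induction k with
    | zero =>
      intro s hs hlt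
      have hres := spectrum.mem_resolventSet_of_norm_lt_mul (a := T) (k := -(s : 𝕜)) <| by
        calc ‖T‖ * ‖(1 : E →L[𝕜] E)‖ ≤ ‖T‖ := mul_le_of_le_one_right (norm_nonneg T) norm_id_le
          _ < ‖-(s : 𝕜)‖ := by simpa [abs_of_nonneg hs] using hlt
      simpa [Algebra.algebraMap_eq_smul_one, add_comm] using hres.neg
    | succ k ih =>
      intro s hs hlt
      refine isUnit_of_norm_sub_lt (ih (s + c / 2) (by positivity) (by push_cast at hlt; linarith))
        hc (hT (s + c / 2) (by positivity)) ?_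
      calc ‖T + (s : 𝕜) • 1 - (T + ((s + c / 2 : ℝ) : 𝕜) • 1)‖
          = ‖((c / 2 : ℝ) : 𝕜)‖ * ‖(1 : E →L[𝕜] E)‖ := by
            rw [← norm_smul, ← norm_neg]; congr 1; push_cast; module
        _ ≤ c / 2 := by
            rw [RCLike.norm_ofReal, abs_of_pos (by positivity)]
            exact mul_le_of_le_one_right (by positivity) norm_id_le
        _ < c := by linarith
  obtain ⟨k, hk⟩ := exists_nat_gt (‖T‖ / (c / 2))
  simpa using key k 0 le_rfl (by rw [div_lt_iff₀ (by positivity)] at hk; linarith)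

end ContinuousLinearMap

namespace CStarModule

variable {B E : Type*} [NonUnitalCStarAlgebra B] [PartialOrder B]
  [NormedAddCommGroup E] [NormedSpace ℂ E] [SMul B E] [CStarModule B E]

local notation "⟪" x ", " y "⟫" => inner B x y

variable (B) in
lemma ext_inner_left {u v : E} (h : ∀ w : E, ⟪w, u⟫ = ⟪w, v⟫) : u = v := by
  rw [← sub_eq_zero, ← inner_self (A := B), inner_sub_right, h, sub_self]

protected lemma add_smul (a b : B) (x : E) : (a + b) • x = a • x + b • x :=
  ext_inner_left B fun w => by simp [add_mul]

protected lemma smul_assoc (c : ℂ) (a : B) (x : E) : (c • a) • x = c • a • x :=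
  ext_inner_left B fun w => by simp [smul_mul_assoc]

protected lemma norm_smul_le (a : B) (x : E) : ‖a • x‖ ≤ ‖a‖ * ‖x‖ := by
  refine le_of_pow_le_pow_left₀ two_ne_zero (by positivity) ?_
  calc ‖a • x‖ ^ 2 = ‖a * ⟪x, x⟫ * star a‖ := by simp [norm_sq_eq B, mul_assoc]
    _ ≤ ‖a‖ * ‖⟪x, x⟫‖ * ‖a‖ := by
        grw [norm_mul_le, norm_mul_le, norm_star]
    _ = (‖a‖ * ‖x‖) ^ 2 := by rw [← norm_sq_eq B]; ring

variable (B) in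
def toSpanSingleton (x : E) : B →L[ℂ] E :=
  LinearMap.mkContinuous
    { toFun := fun a => a • x
      map_add' := fun a b => CStarModule.add_smul a b x
      map_smul' := fun c a => CStarModule.smul_assoc c a x }
    ‖x‖ fun a => by simpa [mul_comm] using CStarModule.norm_smul_le a x

@[simp] lemma toSpanSingleton_apply (x : E) (a : B) : toSpanSingleton B x a = a • x := rfl

variable {ι : Type*} [Fintype ι] (ξ : ι → E)

variable (B) in
/-- `E = ∑ᵢ Ã ξᵢ` without closure, `Ã = ℂ ⊕ B` being the minimal unitization of `B`. -/
def AlgGenerates : Prop := ∀ x : E, ∃ (c : ι → ℂ) (a : ι → B), x = ∑ i, (c i • ξ i + a i • ξ i)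

lemma sq_norm_le_of_eq_sum {x : E} {c : ι → ℂ} {a : ι → B} {M : ℝ}
    (hx : x = ∑ i, (c i • ξ i + a i • ξ i)) (hc : ∀ i, ‖c i‖ ≤ M) (ha : ∀ i, ‖a i‖ ≤ M) :
    ‖x‖ ^ 2 ≤ 2 * M * ∑ i, ‖⟪ξ i, x⟫‖ := by
  calc ‖x‖ ^ 2 = ‖∑ i, (c i • star ⟪ξ i, x⟫ + a i * star ⟪ξ i, x⟫)‖ := by
        rw [norm_sq_eq B]; nth_rw 2 [hx]; simp [inner_sum_right]
    _ ≤ ∑ i, (‖c i‖ * ‖⟪ξ i, x⟫‖ + ‖a i‖ * ‖⟪ξ i, x⟫‖) := by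
        grw [norm_sum_le]
        gcongr with i
        grw [norm_add_le, norm_smul, norm_mul_le, norm_star]
    _ ≤ ∑ i, (M * ‖⟪ξ i, x⟫‖ + M * ‖⟪ξ i, x⟫‖) := by gcongr with i <;> simp [hc, ha]
    _ = 2 * M * ∑ i, ‖⟪ξ i, x⟫‖ := by rw [Finset.mul_sum]; congr! 1; ring

lemma exists_norm_le_mul_sum_norm_inner [CompleteSpace E]
    (hgen : AlgGenerates B ξ) :
    ∃ C > 0, ∀ x : E, ‖x‖ ≤ C * ∑ i, ‖⟪ξ i, x⟫‖ := by
  let Φ : (ι → ℂ) × (ι → B) →L[ℂ] E :=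
    (∑ i, (ContinuousLinearMap.toSpanSingleton ℂ (ξ i)).comp (ContinuousLinearMap.proj i)).coprod
      (∑ i, (toSpanSingleton B (ξ i)).comp (ContinuousLinearMap.proj i))
  have hΦ : ∀ p, Φ p = ∑ i, (p.1 i • ξ i + p.2 i • ξ i) := fun p => by
    simp [Φ, Finset.sum_add_distrib]
  obtain ⟨C, hC, hpre⟩ := ContinuousLinearMap.exists_preimage_norm_le Φ fun x => by
    obtain ⟨c, a, hx⟩ := hgen x
    exact ⟨(c, a), (hΦ _).trans hx.symm⟩
  refine ⟨2 * C, by positivity, fun x => ?_⟩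
  obtain ⟨p, rfl, hp⟩ := hpre x
  have := sq_norm_le_of_eq_sum ξ (hΦ p) (M := C * ‖Φ p‖)
    (fun i => (norm_le_pi_norm p.1 i).trans ((norm_fst_le p).trans hp))
    (fun i => (norm_le_pi_norm p.2 i).trans ((norm_snd_le p).trans hp))
  rcases (norm_nonneg (Φ p)).eq_or_lt with h0 | hpos
  · rw [← h0]; positivity
  · exact le_of_mul_le_mul_left (by linear_combination this) hpos

lemma exists_eq_inner_of_dual_frame {η : ι → E} (hη : ∀ z, z = ∑ i, ⟪η i, z⟫ • ξ i)
    (f : E →+ B) (hf : ∀ (b : B) (x : E), f (b • x) = b * f x) : ∃ y : E, ∀ x, f x = ⟪y, x⟫ :=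
  ⟨∑ i, star (f (ξ i)) • η i, fun x => by
    conv_lhs => rw [hη x]
    simp [hf, inner_sum_left]⟩

variable [StarOrderedRing B]

variable (B) in
def rankOne (x y : E) : E →L[ℂ] E := (toSpanSingleton B x).comp (innerSL y)

@[simp] lemma rankOne_apply (x y z : E) : rankOne B x y z = ⟪y, z⟫ • x := rfl

variable (B) in
def frameOperator : E →L[ℂ] E := ∑ i, rankOne B (ξ i) (ξ i)

lemma frameOperator_apply (x : E) : frameOperator B ξ x = ∑ i, ⟪ξ i, x⟫ • ξ i := by
  simp [frameOperator]

lemma inner_frameOperator_left (x y : E) :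
    ⟪frameOperator B ξ x, y⟫ = ⟪x, frameOperator B ξ y⟫ := by
  simp [frameOperator_apply, inner_sum_left, inner_sum_right]

lemma sq_norm_inner_le_norm_mul_norm_frameOperator_add (j : ι) (x : E) {s : ℝ} (hs : 0 ≤ s) :
    ‖⟪ξ j, x⟫‖ ^ 2 ≤ ‖x‖ * ‖frameOperator B ξ x + (s : ℂ) • x‖ := by
  have hsum : ⟪x, frameOperator B ξ x + (s : ℂ) • x⟫
      = ∑ i, ⟪ξ i, x⟫ * star ⟪ξ i, x⟫ + s • ⟪x, x⟫ := by
    simp [frameOperator_apply, inner_sum_right]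
  calc ‖⟪ξ j, x⟫‖ ^ 2 = ‖⟪ξ j, x⟫ * star ⟪ξ j, x⟫‖ := by rw [CStarRing.norm_self_mul_star, sq]
    _ ≤ ‖∑ i, ⟪ξ i, x⟫ * star ⟪ξ i, x⟫ + s • ⟪x, x⟫‖ := by
        refine CStarAlgebra.norm_le_norm_of_nonneg_of_le (mul_star_self_nonneg _) ?_
        refine le_add_of_le_of_nonneg ?_ (smul_nonneg hs inner_self_nonneg)
        exact Finset.single_le_sum (f := fun i => ⟪ξ i, x⟫ * star ⟪ξ i, x⟫)
          (fun i _ => mul_star_self_nonneg _) (Finset.mem_univ j)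
    _ = ‖⟪x, frameOperator B ξ x + (s : ℂ) • x⟫‖ := by rw [hsum]
    _ ≤ ‖x‖ * ‖frameOperator B ξ x + (s : ℂ) • x‖ := norm_inner_le E (A := B)

lemma exists_pos_forall_le_norm_frameOperator_add [CompleteSpace E]
    (hgen : AlgGenerates B ξ) :
    ∃ c > 0, ∀ s : ℝ, 0 ≤ s → ∀ x, c * ‖x‖ ≤ ‖frameOperator B ξ x + (s : ℂ) • x‖ := by
  obtain ⟨C, hC, hnorm⟩ := exists_norm_le_mul_sum_norm_inner ξ hgen
  set D := C * Fintype.card ι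
  refine ⟨(D ^ 2 + 1)⁻¹, by positivity, fun s hs x => ?_⟩
  set y := frameOperator B ξ x + (s : ℂ) • x
  have hx : ‖x‖ ≤ D * √(‖x‖ * ‖y‖) :=
    calc ‖x‖ ≤ C * ∑ i, ‖⟪ξ i, x⟫‖ := hnorm x
      _ ≤ C * ∑ _i : ι, √(‖x‖ * ‖y‖) := by
          gcongr with i
          exact Real.le_sqrt_of_sq_le (sq_norm_inner_le_norm_mul_norm_frameOperator_add ξ i x hs)
      _ = D * √(‖x‖ * ‖y‖) := by simp [D, mul_assoc]
  have hx2 : ‖x‖ * ‖x‖ ≤ ‖x‖ * (D ^ 2 * ‖y‖) :=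
    calc ‖x‖ * ‖x‖ ≤ (D * √(‖x‖ * ‖y‖)) ^ 2 := by rw [← sq]; gcongr
      _ = ‖x‖ * (D ^ 2 * ‖y‖) := by rw [mul_pow, Real.sq_sqrt (by positivity)]; ring
  have hxy : ‖x‖ ≤ D ^ 2 * ‖y‖ := by
    rcases (norm_nonneg x).eq_or_lt with h0 | hpos
    · rw [← h0]; positivity
    · exact le_of_mul_le_mul_left hx2 hpos
  rw [inv_mul_le_iff₀ (by positivity)]
  linarith [norm_nonneg y]

lemma isUnit_frameOperator [CompleteSpace E]
    (hgen : AlgGenerates B ξ) :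
    IsUnit (frameOperator B ξ) :=
  let ⟨_, hc, hbound⟩ := exists_pos_forall_le_norm_frameOperator_add ξ hgen
  ContinuousLinearMap.isUnit_of_forall_le_norm_add_smul hc hbound

theorem exists_dual_frame [CompleteSpace E]
    (hgen : AlgGenerates B ξ) :
    ∃ η : ι → E, ∀ z, z = ∑ i, ⟪η i, z⟫ • ξ i := by
  obtain ⟨u, hu⟩ := isUnit_frameOperator ξ hgen
  set S : E →L[ℂ] E := ↑u⁻¹
  have hFS : ∀ z, frameOperator B ξ (S z) = z := fun z => by
    rw [← hu]; exact DFunLike.congr_fun u.mul_inv z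
  have hS : ∀ x z, ⟪S x, z⟫ = ⟪x, S z⟫ := fun x z => by
    rw [← hFS z, ← inner_frameOperator_left, hFS, hFS]
  refine ⟨fun i => S (ξ i), fun z => ?_⟩
  conv_lhs => rw [← hFS z, frameOperator_apply]
  simp_rw [hS]

end CStarModule

/-- A right Hilbert `A`-module is a Hilbert `Aᵐᵒᵖ`-module in Mathlib's left-module convention. -/
instance {A E : Type*} [NonUnitalCStarAlgebra A] [PartialOrder A] [StarOrderedRing A]
    [NormedAddCommGroup E] [NormedSpace ℂ E] [SMul Aᵐᵒᵖ E] [CStarModuleRight A E] :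
    CStarModule Aᵐᵒᵖ E where
  inner x y := MulOpposite.op (inner A x y)
  inner_add_right := congrArg MulOpposite.op CStarModuleRight.inner_add_right
  inner_self_nonneg := CStarModuleRight.inner_self_nonneg (A := A)
  inner_self := MulOpposite.op_eq_zero_iff _ |>.trans CStarModuleRight.inner_self
  inner_op_smul_right {a} :=
    congrArg MulOpposite.op (CStarModuleRight.inner_op_smul_right (a := a.unop))
  inner_smul_right_complex := congrArg MulOpposite.op CStarModuleRight.inner_smul_right_complex
  star_inner x y := congrArg MulOpposite.op (CStarModuleRight.star_inner (A := A) x y)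
  norm_eq_sqrt_norm_inner_self := CStarModuleRight.norm_eq_sqrt_norm_inner_self (A := A)

/-- (L. Robert) If a Hilbert `A`-module `H` is algebraically finitely generated (over the
minimal unitization `Ã`), then `K(H)` is unital and `H` is self-dual: every bounded
`A`-module map `f : H → A` is of the form `f(x) = ⟪y, x⟫` for some `y ∈ H`. -/
theorem stmt9 {A E : Type*} [NonUnitalCStarAlgebra A] [PartialOrder A] [StarOrderedRing A]
    [NormedAddCommGroup E] [NormedSpace ℂ E] [SMul Aᵐᵒᵖ E] [CStarModuleRight A E]
    [CompleteSpace E]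
    {n : ℕ} (ξ : Fin n → E)
    (hgen : ∀ h : E, ∃ (c : Fin n → ℂ) (a : Fin n → A),
      h = ∑ i, (c i • ξ i + ξ i <• a i)) :
    (∃ e ∈ compactOperators A E, ∀ T ∈ compactOperators A E, e * T = T ∧ T * e = T) ∧
    (∀ f : E →L[ℂ] A, (∀ (x : E) (a : A), f (x <• a) = f x * a) →
      ∃ y : E, ∀ x : E, f x = (inner A y x : A)) := by
  obtain ⟨η, hη⟩ := CStarModule.exists_dual_frame (B := Aᵐᵒᵖ) ξ fun h => by
    obtain ⟨c, a, hca⟩ := hgen h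
    exact ⟨c, fun i => MulOpposite.op (a i), hca⟩
  refine ⟨⟨1, ?_, fun T _ => ⟨one_mul T, mul_one T⟩⟩, fun f hf => ?_⟩
  · have hone : (1 : E →L[ℂ] E) = ∑ i, CStarModule.rankOne Aᵐᵒᵖ (ξ i) (η i) := by
      ext z
      simpa using hη z
    rw [hone]
    exact subset_closure <| Submodule.sum_mem _ fun i _ =>
      Submodule.subset_span ⟨ξ i, η i, fun z => rfl⟩
  · obtain ⟨y, hy⟩ := CStarModule.exists_eq_inner_of_dual_frame ξ hη
      (MulOpposite.opAddEquiv.toAddMonoidHom.comp (f : E →+ A))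
      fun b x => congrArg MulOpposite.op (hf x b.unop)
    exact ⟨y, fun x => congrArg MulOpposite.unop (hy x)⟩

end
end
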